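/- Let X be a spiny symmetric set and k ≥ 1. Then X has degree at most k if (and only if) for each n ≥ k+1 and each nondegenerate word w ∈ 𝐒Xₙ (one with no identities and no repeated entries) satisfying d_{n−k}w, ..., d_n w ∈ 𝓑_{n−1}(X_{n−1}), we have w ∈ 𝓑ₙ(Xₙ). -/

import Mathlib

open CategoryTheory Opposite

/-- The skeleton of the category of finite nonempty sets: objects are natural
numbers `n`, standing for `[n] = {0, …, n}`, morphisms are all functions. -/
def Ups : Type := ℕ

/-- The natural number underlying an object of `Ups`. -/
def Ups.toNat : Ups → ℕ := fun n => n

/-- The object `[n]` of `Ups`. -/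
def Ups.of : ℕ → Ups := fun n => n

instance : Category Ups where
  Hom n m := Fin (n.toNat + 1) → Fin (m.toNat + 1)
  id _ := _root_.id
  comp f g := g ∘ f

/-- A symmetric set is a presheaf on `Ups`. -/
abbrev SymmSet := Upsᵒᵖ ⥤ Type

/-- The map `ε_{ij} : [1] → [n]` sending `0, 1` to `i, j`. -/
def eps (n : ℕ) (i j : Fin (n + 1)) : Ups.of 1 ⟶ Ups.of n :=
  fun k => if k = 0 then i else j

/-- The set of `n`-simplices of a symmetric set. -/
abbrev simp (X : SymmSet) (n : ℕ) : Type := X.obj (op (Ups.of n))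

/-- The Bousfield–Segal map `𝓑ₙ : Xₙ → X₁ⁿ`, `x ↦ (ε₀₁*x, …, ε₀ₙ*x)`. -/
def BS (X : SymmSet) (n : ℕ) (x : simp X n) : Fin n → simp X 1 :=
  fun k => X.map (eps n 0 k.succ).op x

/-- The Segal map `𝓔ₙ : Xₙ → X₁ⁿ`, `x ↦ (ε₀₁*x, ε₁₂*x, …, ε₍ₙ₋₁₎ₙ*x)`. -/
def ES (X : SymmSet) (n : ℕ) (x : simp X n) : Fin n → simp X 1 :=
  fun k => X.map (eps n k.castSucc k.succ).op x

/-- The canonical map `μ_X` to matrices, `x ↦ (ε_{ij}* x)_{ij}`. -/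
def muMat (X : SymmSet) (n : ℕ) (x : simp X n) :
    Fin (n + 1) → Fin (n + 1) → simp X 1 :=
  fun i j => X.map (eps n i j).op x

/-- A symmetric set is spiny if all Bousfield–Segal maps are injective. -/
def Spiny (X : SymmSet) : Prop := ∀ n, Function.Injective (BS X n)
/-- The matrix symmetric set `Mat(S)`: `n`-simplices are functions `[n]×[n] → S`. -/
def MatS (S : Type) : SymmSet where
  obj k := Fin (k.unop.toNat + 1) → Fin (k.unop.toNat + 1) → S
  map f := TypeCat.ofHom (fun M => fun a b => M (f.unop a) (f.unop b))
  map_id := by intros; rfl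
  map_comp := by intros; rfl

/-- An `n`-simplex is degenerate if it is `ρ* y` for a noninvertible surjection
`ρ : [n] ↠ [m]` and an `m`-simplex `y`. -/
def Degen (X : SymmSet) (n : ℕ) (x : simp X n) : Prop :=
  ∃ (m : ℕ) (ρ : Ups.of n ⟶ Ups.of m), Function.Surjective ρ ∧
    ¬ Function.Bijective ρ ∧ ∃ y : simp X m, x = X.map ρ.op y

/-- The `d`-skeleton of a symmetric set, as a symmetric subset. -/
def skel (X : SymmSet) (d : ℕ) : SymmSet where
  obj k := {x : X.obj k // ∃ (i : ℕ) (_ : i ≤ d) (α : k.unop ⟶ Ups.of i)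
      (y : simp X i), x = X.map α.op y}
  map f := TypeCat.ofHom (fun x => ⟨X.map f x.1, by
    obtain ⟨i, hi, α, y, hy⟩ := x.2
    refine ⟨i, hi, f.unop ≫ α, y, ?_⟩
    rw [hy, ← FunctorToTypes.map_comp_apply]
    rfl⟩)
  map_id := by
    intro k; ext x
    first | exact Subtype.ext (by simp) | simp
  map_comp := by
    intro k k' k'' f g; ext x
    first | exact Subtype.ext (by simp) | simp

/-- A symmetric set is `d`-skeletal when all simplices above dimension `d`
are degenerate. -/
def SkeletalLE (X : SymmSet) (d : ℕ) : Prop :=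
  ∀ n, d < n → ∀ x : simp X n, Degen X n x

/-- `X` has dimension `d` when `d` is the least integer such that `X` is
`d`-skeletal. -/
def HasDim (X : SymmSet) (d : ℕ) : Prop :=
  IsLeast {m | SkeletalLE X m} d

/-- A symmetric set is reduced when it has exactly one `0`-simplex. -/
def Reduced (X : SymmSet) : Prop :=
  Nonempty (simp X 0) ∧ Subsingleton (simp X 0)

/-- A partial group is a reduced spiny symmetric set. -/
def IsPartialGroup (X : SymmSet) : Prop := Reduced X ∧ Spiny X

/-- A partial group is trivial when it has no nonidentity elements. -/
def TrivialPG (X : SymmSet) : Prop := Subsingleton (simp X 1)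

/-- The order of a partial group: the number of its elements (edges). -/
noncomputable def orderPG (X : SymmSet) : ℕ := Nat.card (simp X 1)

/-- An edge is an identity if it is in the image of the degeneracy `X₀ → X₁`. -/
def isIdent (X : SymmSet) (e : simp X 1) : Prop :=
  ∃ v : simp X 0, e = X.map (Quiver.Hom.op
    ((fun _ => 0 : Fin 2 → Fin 1) : Ups.of 1 ⟶ Ups.of 0)) v

/-- The source vertex of an edge. -/
def srcE (X : SymmSet) (e : simp X 1) : simp X 0 :=
  X.map (Quiver.Hom.op ((fun _ => 0 : Fin 1 → Fin 2) : Ups.of 0 ⟶ Ups.of 1)) e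

/-- `X` has (higher Segal) degree at most `k`: for each starry word `w` of
length `n+1 ≥ k+1`, if the last `k+1` faces `d_{n+1-k} w, …, d_{n+1} w` of `w`
are Bousfield–Segal images of simplices, then so is `w`. -/
def HasDegLE (X : SymmSet) (k : ℕ) : Prop :=
  ∀ n, k ≤ n → ∀ w : Fin (n + 1) → simp X 1,
    (∀ a b, srcE X (w a) = srcE X (w b)) →
    (∀ i : Fin (n + 1), n ≤ (i : ℕ) + k →
      (fun j : Fin n => w (i.succAbove j)) ∈ Set.range (BS X n)) →
    w ∈ Set.range (BS X (n + 1))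

/-- `X` has degree `d`: `d` is the least `k ≥ 1` with `HasDegLE X k`. -/
def DegreeIs (X : SymmSet) (d : ℕ) : Prop :=
  IsLeast {k | 1 ≤ k ∧ HasDegLE X k} d

/-- `W`, with structure maps `i, j`, is a coproduct of `Y` and `Z` in the
category of partial groups. -/
def IsPGCoproduct (W Y Z : SymmSet) (i : Y ⟶ W) (j : Z ⟶ W) : Prop :=
  ∀ V : SymmSet, IsPartialGroup V → ∀ (f : Y ⟶ V) (g : Z ⟶ V),
    ∃! h : W ⟶ V, i ≫ h = f ∧ j ≫ h = g

/-- The nerve of a group `G`, as a symmetric set: an `n`-simplex is a matrix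
`(g_{ij})` of elements of `G` satisfying the cocycle condition. -/
def grpNerve (G : Type) [Group G] : SymmSet where
  obj k := {M : Fin (k.unop.toNat + 1) → Fin (k.unop.toNat + 1) → G //
      ∀ i j l, M i j * M j l = M i l}
  map f := TypeCat.ofHom (fun M => ⟨fun a b => M.1 (f.unop a) (f.unop b),
    fun i j l => M.2 (f.unop i) (f.unop j) (f.unop l)⟩)
  map_id := by intro k; ext M; first | exact Subtype.ext rfl | rfl
  map_comp := by intros; ext M; first | exact Subtype.ext rfl | rfl


/-! A word `w` with an entry `w a` that is an identity or repeats another entry is determined by its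
face `d_a w` together with the position of `w a`. If `d_a w = 𝓑 x`, then `w = 𝓑 (σ* x)` for the
surjection `σ : [n+1] → [n]` that sends `a + 1` to `0` (identity case; the common source of the
entries is the vertex `0` of `x`) or to the vertex of `x` carrying the repeated edge. So only `d_a w`
has to be shown to be a Bousfield–Segal image: if `a` is among the last `k + 1` positions this is
the hypothesis, and otherwise it follows by induction on `n`, because the last `k + 1` faces of
`d_a w` are faces of the last `k + 1` faces of `w`. -/

-- Ascribing a function the type `Ups.of n ⟶ Ups.of m` directly leaves `Ups.of` unfolded in the
-- elaborated term, which defeats rewriting.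
def Ups.ofHom {n m : ℕ} (f : Fin (n + 1) → Fin (m + 1)) : Ups.of n ⟶ Ups.of m := f

namespace SymmSet

variable (X : SymmSet)

lemma map_op_map_op {a b c : Ups} (f : a ⟶ b) (g : b ⟶ c) (x : X.obj (op c)) :
    X.map f.op (X.map g.op x) = X.map (f ≫ g).op x := by
  rw [op_comp, Functor.map_comp_apply]

lemma eps_comp {n m : ℕ} (i j : Fin (n + 1)) (f : Ups.of n ⟶ Ups.of m) :
    eps n i j ≫ f = eps m (f i) (f j) := by
  funext t
  exact apply_ite f _ i j

lemma map_eps_map {n m : ℕ} (i j : Fin (n + 1)) (f : Ups.of n ⟶ Ups.of m) (x : simp X m) :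
    X.map (eps n i j).op (X.map f.op x) = X.map (eps m (f i) (f j)).op x := by
  rw [map_op_map_op, eps_comp]

lemma BS_map_ofHom {n m : ℕ} (f : Fin (n + 1) → Fin (m + 1)) (x : simp X m) (l : Fin n) :
    BS X n (X.map (Ups.ofHom f).op x) l = X.map (eps m (f 0) (f l.succ)).op x :=
  map_eps_map X _ _ _ x

lemma removeNth_BS {n : ℕ} (x : simp X (n + 1)) (a : Fin (n + 1)) :
    a.removeNth (BS X (n + 1) x) =
      BS X n (X.map (Ups.ofHom a.succ.succAbove).op x) := by
  funext l
  rw [BS_map_ofHom, Fin.succAbove_ne_zero_zero (Fin.succ_ne_zero a), Fin.succ_succAbove_succ]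
  rfl

lemma removeNth_mem_range_BS {n : ℕ} {w : Fin (n + 1) → simp X 1}
    (hw : w ∈ Set.range (BS X (n + 1))) (a : Fin (n + 1)) :
    a.removeNth w ∈ Set.range (BS X n) := by
  obtain ⟨x, rfl⟩ := hw
  exact ⟨_, (removeNth_BS X x a).symm⟩

lemma insertNth_BS_mem_range {n : ℕ} (x : simp X n) (a c : Fin (n + 1)) :
    a.insertNth (X.map (eps n 0 c).op x) (BS X n x) ∈ Set.range (BS X (n + 1)) := by
  refine ⟨X.map (Ups.ofHom (Fin.cases 0 (a.insertNth c Fin.succ))).op x, funext fun j => ?_⟩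
  rw [BS_map_ofHom, Fin.cases_zero, Fin.cases_succ]
  induction j using a.succAboveCases with
  | x => rw [Fin.insertNth_apply_same, Fin.insertNth_apply_same]
  | p l => rw [Fin.insertNth_apply_succAbove, Fin.insertNth_apply_succAbove]; rfl

lemma srcE_eq_map_ofHom (e : simp X 1) :
    srcE X e = X.map (Ups.ofHom fun _ : Fin 1 => (0 : Fin 2)).op e :=
  rfl

lemma isIdent_iff_exists_map_ofHom (e : simp X 1) :
    isIdent X e ↔ ∃ v : simp X 0, e = X.map (Ups.ofHom fun _ : Fin 2 => (0 : Fin 1)).op v :=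
  Iff.rfl

lemma srcE_map_eps {n : ℕ} (i j : Fin (n + 1)) (x : simp X n) :
    srcE X (X.map (eps n i j).op x) = X.map (Ups.ofHom fun _ : Fin 1 => i).op x := by
  rw [srcE_eq_map_ofHom, map_op_map_op]
  rfl

lemma eq_map_eps_self_of_isIdent {e : simp X 1} (he : isIdent X e) {n : ℕ} {i j : Fin (n + 1)}
    {x : simp X n} (hsrc : srcE X e = srcE X (X.map (eps n i j).op x)) :
    e = X.map (eps n i i).op x := by
  obtain ⟨v, rfl⟩ := (isIdent_iff_exists_map_ofHom X e).mp he
  have hid : (Ups.ofHom fun _ : Fin 1 => (0 : Fin 2)) ≫ Ups.ofHom (fun _ : Fin 2 => (0 : Fin 1)) =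
      𝟙 (Ups.of 0) :=
    funext fun t => (Fin.fin_one_eq_zero t).symm
  have hv : v = X.map (Ups.ofHom fun _ : Fin 1 => i).op x := by
    rwa [srcE_map_eps, srcE_eq_map_ofHom, map_op_map_op, hid, op_id, Functor.map_id_apply] at hsrc
  have hdeg : (Ups.ofHom fun _ : Fin 2 => (0 : Fin 1)) ≫ Ups.ofHom (fun _ : Fin 1 => i) = eps n i i :=
    funext fun _ => (ite_self i).symm
  rw [hv, map_op_map_op, hdeg]

lemma exists_map_eps_eq_of_degenerate {n : ℕ} (hn : 0 < n) {w : Fin (n + 1) → simp X 1}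
    (hsrc : ∀ a b, srcE X (w a) = srcE X (w b)) {a : Fin (n + 1)} {x : simp X n}
    (hx : a.removeNth w = BS X n x) (ha : isIdent X (w a) ∨ ∃ b ≠ a, w a = w b) :
    ∃ c, X.map (eps n 0 c).op x = w a := by
  rcases ha with hid | ⟨b, hba, hab⟩
  · let l : Fin n := ⟨0, hn⟩
    refine ⟨0, (eq_map_eps_self_of_isIdent X hid (j := l.succ) ?_).symm⟩
    rw [hsrc a (a.succAbove l)]
    exact congrArg (srcE X) (congrFun hx l)
  · obtain ⟨l, rfl⟩ := Fin.exists_succAbove_eq hba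
    exact ⟨l.succ, (congrFun hx l).symm.trans hab.symm⟩

lemma mem_range_BS_of_degenerate {n : ℕ} (hn : 0 < n) {w : Fin (n + 1) → simp X 1}
    (hsrc : ∀ a b, srcE X (w a) = srcE X (w b)) {a : Fin (n + 1)}
    (hface : a.removeNth w ∈ Set.range (BS X n)) (ha : isIdent X (w a) ∨ ∃ b ≠ a, w a = w b) :
    w ∈ Set.range (BS X (n + 1)) := by
  obtain ⟨x, hx⟩ := hface
  obtain ⟨c, hc⟩ := exists_map_eps_eq_of_degenerate X hn hsrc hx.symm ha
  rw [← Fin.insertNth_self_removeNth a w, ← hx, ← hc]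
  exact insertNth_BS_mem_range X x a c

lemma removeNth_removeNth_mem_range_BS {k m : ℕ} {w : Fin (m + 2) → simp X 1}
    (hfaces : ∀ i : Fin (m + 2), m + 1 ≤ (i : ℕ) + k → i.removeNth w ∈ Set.range (BS X (m + 1)))
    {a : Fin (m + 2)} (ha : (a : ℕ) + k < m + 1) (i : Fin (m + 1)) (hi : m ≤ (i : ℕ) + k) :
    i.removeNth (a.removeNth w) ∈ Set.range (BS X m) := by
  have hai : a.succAbove i = i.succ :=
    Fin.succAbove_of_le_castSucc _ _ (by rw [Fin.le_def, Fin.val_castSucc]; omega)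
  rw [Fin.removeNth_removeNth_eq_swap, hai]
  exact removeNth_mem_range_BS X (hfaces i.succ (by rw [Fin.val_succ]; omega)) _

end SymmSet

theorem hasDegLE_iff_nondegenerate_words_general (X : SymmSet)
    (k : ℕ) (hk : 1 ≤ k) :
    HasDegLE X k ↔
      (∀ n, k ≤ n → ∀ w : Fin (n + 1) → simp X 1,
        (∀ a b, srcE X (w a) = srcE X (w b)) →
        (∀ a, ¬ isIdent X (w a)) →
        Function.Injective w →
        (∀ i : Fin (n + 1), n ≤ (i : ℕ) + k →
          (fun j : Fin n => w (i.succAbove j)) ∈ Set.range (BS X n)) →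
        w ∈ Set.range (BS X (n + 1))) := by
  refine ⟨fun H n hn w hsrc _ _ hfaces => H n hn w hsrc hfaces, fun H n => ?_⟩
  induction n using Nat.strong_induction_on with
  | _ n IH =>
  intro hn w hsrc hfaces
  by_cases hdeg : ∃ a, isIdent X (w a) ∨ ∃ b ≠ a, w a = w b
  · obtain ⟨a, ha⟩ := hdeg
    have hface : a.removeNth w ∈ Set.range (BS X n) := by
      rcases le_or_gt n (a + k) with h | h
      · exact hfaces a h
      obtain ⟨m, rfl⟩ : ∃ m, n = m + 1 := ⟨n - 1, by omega⟩
      exact IH m (by omega) (by omega) _ (fun _ _ => hsrc _ _)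
        (SymmSet.removeNth_removeNth_mem_range_BS X hfaces h)
    exact SymmSet.mem_range_BS_of_degenerate X (by omega) hsrc hface ha
  · push Not at hdeg
    refine H n hn w hsrc (fun a => (hdeg a).1) (fun a b hab => ?_) hfaces
    by_contra hne
    exact (hdeg a).2 b (Ne.symm hne) hab

/-- A spiny symmetric set has degree at most `k` if and only if the degree
condition holds for all *nondegenerate* starry words: words with no identity
entries and no repeated entries. -/
theorem hasDegLE_iff_nondegenerate_words (X : SymmSet) (hX : Spiny X)
    (k : ℕ) (hk : 1 ≤ k) :
    HasDegLE X k ↔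
      (∀ n, k ≤ n → ∀ w : Fin (n + 1) → simp X 1,
        (∀ a b, srcE X (w a) = srcE X (w b)) →
        (∀ a, ¬ isIdent X (w a)) →
        Function.Injective w →
        (∀ i : Fin (n + 1), n ≤ (i : ℕ) + k →
          (fun j : Fin n => w (i.succAbove j)) ∈ Set.range (BS X n)) →
        w ∈ Set.range (BS X (n + 1))) :=
  hasDegLE_iff_nondegenerate_words_general X k hk
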